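/- arXiv:2103.05417 — 2 statements merged into one kernel-verified Lean document; each statement's English description precedes it below -/
import Mathlib

section
/- Let H be a graph with at least one edge and no isolated vertices, t ≥ 1, and let C be the graph obtained from μ_t(H) by attaching ℓ ≥ 1 pendant vertices x_1,…,x_ℓ to the root w. If S is a minimum-size subset of V(μ_t(H)) \ {w} such that S ∪ {w} is a determining set for μ_t(H), then S ∪ {x_2,…,x_ℓ} is a minimum-size determining set for C. -/
open SimpleGraph

/-- The generalized Mycielskian `μ_t(G)`: vertices are `some (s, i)` for levels
`0 ≤ s ≤ t` (level `0` being the original vertices) plus a root `none`. -/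
def Mycielskian {V : Type*} (G : SimpleGraph V) (t : ℕ) :
    SimpleGraph (Option (Fin (t + 1) × V)) where
  Adj x y :=
    match x, y with
    | none, none => False
    | none, some (s, _) => s.val = t
    | some (s, _), none => s.val = t
    | some (s, i), some (r, j) =>
        G.Adj i j ∧ ((s.val = 0 ∧ r.val = 0) ∨ s.val + 1 = r.val ∨ r.val + 1 = s.val)
  symm := by
    refine ⟨?_⟩
    rintro (_ | ⟨s, i⟩) (_ | ⟨r, j⟩) h
    · exact h
    · exact h
    · exact h
    · exact ⟨h.1.symm, by tauto⟩
  loopless := by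
    refine ⟨?_⟩
    rintro (_ | ⟨s, i⟩) h
    · exact h
    · exact G.loopless.irrefl i h.1

/-- `S` is a determining set for `G`: the only automorphism fixing `S` pointwise
is the identity. -/
def IsDetermining {V : Type*} (G : SimpleGraph V) (S : Set V) : Prop :=
  ∀ φ : G ≃g G, (∀ v ∈ S, φ v = v) → ∀ v, φ v = v

/-- The determining number of `G`. -/
noncomputable def detNum {V : Type*} (G : SimpleGraph V) : ℕ :=
  sInf {n | ∃ S : Finset V, S.card = n ∧ IsDetermining G ↑S}

/-- A coloring is distinguishing if no nontrivial automorphism preserves all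
color classes. -/
def IsDistinguishing {V : Type*} (G : SimpleGraph V) {C : Type*} (c : V → C) : Prop :=
  ∀ φ : G ≃g G, (∀ v, c (φ v) = c v) → ∀ v, φ v = v

/-- The distinguishing number of `G`. -/
noncomputable def distNum {V : Type*} (G : SimpleGraph V) : ℕ :=
  sInf {d | ∃ c : V → Fin d, IsDistinguishing G c}

/-- The cost of 2-distinguishing: the minimum size of a color class over all
2-distinguishing colorings. -/
noncomputable def cost2 {V : Type*} (G : SimpleGraph V) [Fintype V] : ℕ :=
  sInf {n | ∃ c : V → Bool, IsDistinguishing G c ∧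
    n = (Finset.univ.filter fun v => c v = true).card}

/-- The twin equivalence relation: equal open neighborhoods. -/
def twinSetoid {V : Type*} (G : SimpleGraph V) : Setoid V where
  r x y := G.neighborSet x = G.neighborSet y
  iseqv := ⟨fun _ => rfl, Eq.symm, Eq.trans⟩

/-- The twin quotient graph `G̃`. -/
def twinQuotient {V : Type*} (G : SimpleGraph V) :
    SimpleGraph (Quotient (twinSetoid G)) where
  Adj a b := ∃ p q : V, Quotient.mk (twinSetoid G) p = a ∧
    Quotient.mk (twinSetoid G) q = b ∧ G.Adj p q
  symm := by refine ⟨?_⟩; rintro a b ⟨p, q, hp, hq, h⟩; exact ⟨q, p, hq, hp, h.symm⟩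
  loopless := by
    refine ⟨?_⟩
    rintro a ⟨p, q, rfl, hq, h⟩
    have htw : G.neighborSet q = G.neighborSet p := Quotient.exact hq
    have hmem : q ∈ G.neighborSet p := h
    rw [← htw] at hmem
    exact G.loopless.irrefl q hmem

/-- A twin cover: contains at least one of every pair of distinct twins. -/
def IsTwinCover {V : Type*} (G : SimpleGraph V) (T : Set V) : Prop :=
  ∀ x y : V, x ≠ y → G.neighborSet x = G.neighborSet y → x ∈ T ∨ y ∈ T

/-- A minimum twin cover. -/
def IsMinTwinCover {V : Type*} (G : SimpleGraph V) (T : Set V) : Prop :=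
  IsTwinCover G T ∧ ∀ T' : Set V, IsTwinCover G T' → T.ncard ≤ T'.ncard

/-- Attach `ℓ` pendant vertices to the vertex `w` of `G`. -/
def attachPendants {V : Type*} (G : SimpleGraph V) (w : V) (ℓ : ℕ) :
    SimpleGraph (V ⊕ Fin ℓ) where
  Adj x y :=
    match x, y with
    | Sum.inl a, Sum.inl b => G.Adj a b
    | Sum.inl a, Sum.inr _ => a = w
    | Sum.inr _, Sum.inl b => b = w
    | Sum.inr _, Sum.inr _ => False
  symm := by refine ⟨?_⟩; rintro (a | a) (b | b) h <;> simp_all <;> exact h.symm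
  loopless := by refine ⟨?_⟩; rintro (a | a) h <;> simp_all


/-!
Every vertex of `μ_t(H)` has two distinct neighbours while a pendant has only the root, so an
automorphism of `C` permutes the pendants and restricts to an automorphism of `μ_t(H)` fixing the
root; conversely automorphisms of `μ_t(H)` fixing the root extend to `C`, and the pendants can be
permuted freely. Hence a determining set of `C` contains all pendants but one, and its trace on
`μ_t(H)` together with the root determines `μ_t(H)`. In the other direction, once one pendant is
fixed the root is fixed, so `S` fixes all of `μ_t(H)`, and the last pendant is the only vertex
left for it to move to.
-/

theorem Set.ncard_image_inl_union_image_inr {α β : Type*} [Finite α] [Finite β]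
    (s : Set α) (u : Set β) :
    (Sum.inl '' s ∪ Sum.inr '' u : Set (α ⊕ β)).ncard = s.ncard + u.ncard := by
  rw [Set.ncard_union_eq Set.disjoint_image_inl_image_inr,
    Set.ncard_image_of_injective _ Sum.inl_injective,
    Set.ncard_image_of_injective _ Sum.inr_injective]

theorem Set.ncard_eq_ncard_preimage_inl_add {α β : Type*} [Finite α] [Finite β]
    (s : Set (α ⊕ β)) : s.ncard = (Sum.inl ⁻¹' s).ncard + (Sum.inr ⁻¹' s).ncard := by
  conv_lhs => rw [← Set.image_preimage_inl_union_image_preimage_inr s]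
  exact Set.ncard_image_inl_union_image_inr _ _

theorem Function.Injective.apply_eq_self_of_forall_ne {α : Type*} {f : α → α}
    (hf : Function.Injective f) {a : α} (h : ∀ x ≠ a, f x = x) : f a = a := by
  by_contra hne
  exact hne (hf (h _ hne))

section AttachPendants

variable {W : Type*} {G : SimpleGraph W} {w : W} {ℓ : ℕ}

theorem attachPendants_adj_inr_iff {k : Fin ℓ} {y : W ⊕ Fin ℓ} :
    (attachPendants G w ℓ).Adj (.inr k) y ↔ y = .inl w := by
  rcases y with b | k'
  · exact Sum.inl_injective.eq_iff.symm
  · exact iff_of_false id Sum.inr_ne_inl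

def attachPendantsIso (ψ : G ≃g G) (hψ : ψ w = w) (σ : Equiv.Perm (Fin ℓ)) :
    attachPendants G w ℓ ≃g attachPendants G w ℓ where
  toEquiv := Equiv.sumCongr ψ.toEquiv σ
  map_rel_iff' := by
    rintro (a | k) (b | k')
    · exact ψ.map_rel_iff
    · exact ψ.injective.eq_iff' hψ
    · exact ψ.injective.eq_iff' hψ
    · exact Iff.rfl

theorem IsDetermining.union_root_preimage_inl {B : Set (W ⊕ Fin ℓ)}
    (hB : IsDetermining (attachPendants G w ℓ) B) :
    IsDetermining G (Sum.inl ⁻¹' B ∪ {w}) := by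
  intro ψ hψ v
  have hψw : ψ w = w := hψ w (.inr rfl)
  refine Sum.inl_injective (hB (attachPendantsIso ψ hψw 1) ?_ (.inl v))
  rintro (u | k) hu
  · exact congrArg Sum.inl (hψ u (.inl hu))
  · rfl

theorem IsDetermining.pred_le_ncard_preimage_inr {B : Set (W ⊕ Fin ℓ)}
    (hB : IsDetermining (attachPendants G w ℓ) B) : ℓ - 1 ≤ (Sum.inr ⁻¹' B).ncard := by
  have hmissing : (Sum.inr ⁻¹' B)ᶜ.Subsingleton := by
    intro a ha b hb
    by_contra hab
    have hswap := hB (attachPendantsIso Iso.refl rfl (Equiv.swap a b)) (by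
      rintro (u | k) hk
      · rfl
      · exact congrArg Sum.inr
          (Equiv.swap_apply_of_ne_of_ne (fun h => ha (h ▸ hk)) (fun h => hb (h ▸ hk)))) (.inr a)
    have hab' : Sum.inr b = Sum.inr a :=
      (congrArg Sum.inr (Equiv.swap_apply_left a b)).symm.trans hswap
    exact hab (Sum.inr_injective hab').symm
  have hsum := Set.ncard_add_ncard_compl (Sum.inr ⁻¹' B)
  rw [Nat.card_eq_fintype_card, Fintype.card_fin] at hsum
  have := Set.ncard_le_one_iff_subsingleton.mpr hmissing
  omega

variable (hG : ∀ v, (G.neighborSet v).Nontrivial)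
include hG

section

variable (φ : attachPendants G w ℓ ≃g attachPendants G w ℓ)

theorem attachPendants_exists_apply_inl_eq_inl (v : W) :
    ∃ v', φ (.inl v) = .inl v' := by
  rcases hφ : φ (.inl v) with v' | k
  · exact ⟨v', rfl⟩
  · obtain ⟨y, hy, z, hz, hyz⟩ := hG v
    have hw : ∀ x ∈ G.neighborSet v, φ (.inl x) = .inl w := fun x hx =>
      attachPendants_adj_inr_iff.mp
        (hφ ▸ φ.map_rel_iff.mpr (show (attachPendants G w ℓ).Adj (.inl v) (.inl x) from hx))
    exact absurd (Sum.inl_injective (φ.injective ((hw y hy).trans (hw z hz).symm))) hyz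

theorem attachPendants_exists_apply_inr_eq_inr (k : Fin ℓ) :
    ∃ k', φ (.inr k) = .inr k' := by
  rcases hφ : φ (.inr k) with v | k'
  · obtain ⟨v', hv'⟩ := attachPendants_exists_apply_inl_eq_inl hG φ.symm v
    rw [← hφ, φ.symm_apply_apply] at hv'
    exact absurd hv' Sum.inr_ne_inl
  · exact ⟨k', rfl⟩

theorem attachPendants_iso_apply_inl_root (k : Fin ℓ) :
    φ (.inl w) = .inl w := by
  obtain ⟨k', hk'⟩ := attachPendants_exists_apply_inr_eq_inr hG φ k
  exact attachPendants_adj_inr_iff.mp (hk' ▸ φ.map_rel_iff.mpr (show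
    (attachPendants G w ℓ).Adj (.inr k) (.inl w) from rfl))

theorem attachPendants_exists_iso_restrict :
    ∃ ψ : G ≃g G, ∀ v, φ (.inl v) = .inl (ψ v) := by
  choose f hf using attachPendants_exists_apply_inl_eq_inl hG φ
  choose g hg using attachPendants_exists_apply_inl_eq_inl hG φ.symm
  have hgf : ∀ v, g (f v) = v := fun v =>
    Sum.inl_injective (by rw [← hg, ← hf, φ.symm_apply_apply])
  have hfg : ∀ v, f (g v) = v := fun v =>
    Sum.inl_injective (by rw [← hf, ← hg, φ.apply_symm_apply])
  refine ⟨⟨⟨f, g, hgf, hfg⟩, fun {a b} => ?_⟩, hf⟩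
  have h := φ.map_rel_iff (a := .inl a) (b := .inl b)
  rwa [hf, hf] at h

end

theorem IsDetermining.image_inl_union_image_inr {S : Set W}
    (hS : IsDetermining G (S ∪ {w})) (k₀ : Fin ℓ) :
    IsDetermining (attachPendants G w ℓ) (Sum.inl '' S ∪ Sum.inr '' {k | k ≠ k₀}) := by
  intro φ hφ
  obtain ⟨ψ, hψ⟩ := attachPendants_exists_iso_restrict hG φ
  have hψw : ψ w = w :=
    Sum.inl_injective ((hψ w).symm.trans (attachPendants_iso_apply_inl_root hG φ k₀))
  have hψid : ∀ v, ψ v = v := hS ψ (by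
    rintro v (hv | rfl)
    · exact Sum.inl_injective ((hψ v).symm.trans (hφ _ (.inl ⟨v, hv, rfl⟩)))
    · exact hψw)
  have hfix : ∀ x ≠ .inr k₀, φ x = x := by
    rintro (v | k) hk
    · rw [hψ, hψid]
    · exact hφ _ (.inr ⟨k, fun h => hk (h ▸ rfl), rfl⟩)
  intro x
  by_cases hx : x = .inr k₀
  · exact hx ▸ φ.injective.apply_eq_self_of_forall_ne hfix
  · exact hfix x hx

end AttachPendants

theorem mycielskian_neighborSet_nontrivial {V : Type*} {H : SimpleGraph V} {t : ℕ}
    (hedge : ∃ a b : V, H.Adj a b) (hnoiso : ∀ v : V, ∃ u : V, H.Adj v u) :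
    ∀ v, ((Mycielskian H t).neighborSet v).Nontrivial
  | none => by
    obtain ⟨a, b, hab⟩ := hedge
    exact ⟨some (Fin.last t, a), rfl, some (Fin.last t, b), rfl, by simpa using hab.ne⟩
  | some (s, i) => by
    obtain ⟨u, hu⟩ := hnoiso i
    -- at level `0` the "lower" neighbour is the copy of `u` at level `0` itself
    have hdown :
        some (⟨s.val - 1, by omega⟩, u) ∈ (Mycielskian H t).neighborSet (some (s, i)) :=
      ⟨hu, by simp only; omega⟩
    by_cases hs : s.val = t
    · exact ⟨none, hs, _, hdown, by simp⟩
    · have hup :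
          some (⟨s.val + 1, by omega⟩, u) ∈ (Mycielskian H t).neighborSet (some (s, i)) :=
        ⟨hu, .inr (.inl rfl)⟩
      refine ⟨_, hup, _, hdown, ?_⟩
      simp only [ne_eq, Option.some.injEq, Prod.mk.injEq, Fin.ext_iff, not_and]
      omega

/-- if `S` is a minimum-size subset of `V(μ_t(H)) \ {w}` with
`S ∪ {w}` determining for `μ_t(H)`, then `S ∪ {x_2,…,x_ℓ}` is a minimum-size
determining set for `C`, the graph obtained from `μ_t(H)` by attaching `ℓ`
pendant vertices to the root. -/
theorem pendant_determining {V : Type*} [Fintype V] (H : SimpleGraph V)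
    (hedge : ∃ a b : V, H.Adj a b) (hnoiso : ∀ v : V, ∃ u : V, H.Adj v u)
    (t : ℕ) (ℓ : ℕ) (hℓ : 1 ≤ ℓ)
    (S : Set (Option (Fin (t + 1) × V)))
    (hSdet : IsDetermining (Mycielskian H t) (S ∪ {none}))
    (hSmin : ∀ S' : Set (Option (Fin (t + 1) × V)), none ∉ S' →
      IsDetermining (Mycielskian H t) (S' ∪ {none}) → S.ncard ≤ S'.ncard) :
    IsDetermining (attachPendants (Mycielskian H t) none ℓ)
      (Sum.inl '' S ∪ Sum.inr '' {k : Fin ℓ | k ≠ ⟨0, by omega⟩}) ∧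
    (∀ B : Set ((Option (Fin (t + 1) × V)) ⊕ Fin ℓ),
      IsDetermining (attachPendants (Mycielskian H t) none ℓ) B →
      (Sum.inl '' S ∪ Sum.inr '' {k : Fin ℓ | k ≠ ⟨0, by omega⟩}).ncard ≤
        B.ncard) := by
  have hdeg := mycielskian_neighborSet_nontrivial (t := t) hedge hnoiso
  refine ⟨hSdet.image_inl_union_image_inr hdeg _, fun B hB => ?_⟩
  have hS : S.ncard ≤ (Sum.inl ⁻¹' B).ncard :=
    (hSmin (Sum.inl ⁻¹' B \ {none}) (fun h => h.2 rfl)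
      (by rw [Set.sdiff_union_self]; exact hB.union_root_preimage_inl)).trans
      (Set.ncard_le_ncard Set.sdiff_subset)
  calc _ = S.ncard + (ℓ - 1) := by
        rw [Set.ncard_image_inl_union_image_inr, ← Set.compl_singleton_eq, Set.ncard_compl,
          Set.ncard_singleton, Nat.card_eq_fintype_card, Fintype.card_fin]
    _ ≤ (Sum.inl ⁻¹' B).ncard + (Sum.inr ⁻¹' B).ncard :=
        add_le_add hS hB.pred_le_ncard_preimage_inr
    _ = B.ncard := (Set.ncard_eq_ncard_preimage_inl_add B).symm
end

section
/- Let T be a minimum twin cover of a graph G that has at least one isolated vertex, and let u be the isolated vertex of G not in T. Then for t ≥ 1, the set {u_i^s : v_i ∈ T, 0 ≤ s ≤ t} ∪ {u^s : 1 ≤ s ≤ t−1} is a minimum twin cover of μ_t(G), of size (t+1)|T| + t − 1. -/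
open SimpleGraph

/-!
The twins of `μ_t(G)` are copies, on one level, of twins of `G` (a vertex with a neighbour `k` in
`G` is adjacent to the copies of `k` exactly on the levels next to its own, which pins its level
down), and pairs of isolated vertices on levels below `t`; the root has no twin, since it alone
sees `u^t`. The given set covers all of these.

Conversely, every layer of a twin cover `S` of `μ_t(G)` is a twin cover of `G`, so it has at least
`|T|` elements. All isolated vertices on the levels `< t` have empty neighbourhood, so `S` misses at
most one of them; on the remaining `t - 1` lower levels the layer contains every isolated vertex of
`G`, so it stays a twin cover after deleting `u` and has more than `|T|` elements.
-/

theorem Fintype.card_mul_succ_le_sum_add_one {ι : Type*} [Fintype ι] (f : ι → ℕ) (c : ℕ)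
    (hf : ∀ a, c ≤ f a) (hlow : ∀ a b, f a ≤ c → f b ≤ c → a = b) :
    Fintype.card ι * (c + 1) ≤ ∑ a, f a + 1 := by
  have hcard : (Finset.univ.filter fun a => f a ≤ c).card ≤ 1 := Finset.card_le_one.2
    fun a ha b hb => hlow a b (Finset.mem_filter.1 ha).2 (Finset.mem_filter.1 hb).2
  calc Fintype.card ι * (c + 1) = ∑ _a : ι, (c + 1) := by simp
    _ ≤ ∑ a, (f a + if f a ≤ c then 1 else 0) := by
        refine Finset.sum_le_sum fun a _ => ?_
        have := hf a
        split_ifs <;> omega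
    _ ≤ ∑ a, f a + 1 := by
        rw [Finset.sum_add_distrib, Finset.sum_boole]
        push_cast
        omega

namespace IsTwinCover

variable {V : Type*} {G : SimpleGraph V} {T : Set V}

theorem eq_of_notMem (hT : IsTwinCover G T) {x y : V} (hx : x ∉ T) (hy : y ∉ T)
    (h : G.neighborSet x = G.neighborSet y) : x = y := by
  by_contra hxy
  exact (hT x y hxy h).elim hx hy

theorem sdiff_singleton (hT : IsTwinCover G T) {x : V}
    (htw : ∀ y, G.neighborSet y = G.neighborSet x → y ∈ T) : IsTwinCover G (T \ {x}) := by
  intro a b hab h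
  by_cases hax : a = x
  · subst hax
    exact Or.inr ⟨htw b h.symm, Ne.symm hab⟩
  by_cases hbx : b = x
  · subst hbx
    exact Or.inl ⟨htw a h, hab⟩
  exact (hT a b hab h).imp (fun ha => ⟨ha, hax⟩) (fun hb => ⟨hb, hbx⟩)

end IsTwinCover

theorem IsMinTwinCover.ncard_lt {V : Type*} [Finite V] {G : SimpleGraph V} {T T' : Set V}
    (hT : IsMinTwinCover G T) (hT' : IsTwinCover G T') {x : V} (hx : x ∈ T')
    (htw : ∀ y, G.neighborSet y = G.neighborSet x → y ∈ T') : T.ncard < T'.ncard :=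
  (hT.2 _ (hT'.sdiff_singleton htw)).trans_lt (Set.ncard_sdiff_singleton_lt_of_mem hx)

namespace Mycielskian

variable {V : Type*} {G : SimpleGraph V} {t : ℕ}

@[simp]
theorem adj_some_some {s r : Fin (t + 1)} {i j : V} :
    (Mycielskian G t).Adj (some (s, i)) (some (r, j)) ↔
      G.Adj i j ∧ ((s.val = 0 ∧ r.val = 0) ∨ s.val + 1 = r.val ∨ r.val + 1 = s.val) :=
  Iff.rfl

@[simp]
theorem adj_some_none {s : Fin (t + 1)} {i : V} :
    (Mycielskian G t).Adj (some (s, i)) none ↔ s.val = t :=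
  Iff.rfl

@[simp]
theorem adj_none_some {s : Fin (t + 1)} {i : V} :
    (Mycielskian G t).Adj none (some (s, i)) ↔ s.val = t :=
  Iff.rfl

theorem adj_pred_level {s : Fin (t + 1)} {i k : V} :
    (Mycielskian G t).Adj (some (s, i)) (some (⟨s - 1, by omega⟩, k)) ↔ G.Adj i k := by
  simp only [adj_some_some, and_iff_left_iff_imp]
  omega

theorem neighborSet_some_eq_iff {s : Fin (t + 1)} {i j : V} :
    (Mycielskian G t).neighborSet (some (s, i)) = (Mycielskian G t).neighborSet (some (s, j)) ↔
      G.neighborSet i = G.neighborSet j := by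
  constructor
  · intro h
    ext k
    simpa only [mem_neighborSet, adj_pred_level] using
      Set.ext_iff.1 h (some (⟨s - 1, by omega⟩, k))
  · intro h
    ext (_ | ⟨r, k⟩)
    · simp
    · have hk : G.Adj i k ↔ G.Adj j k := Set.ext_iff.1 h k
      simp only [mem_neighborSet, adj_some_some, hk]

theorem level_eq_top_iff {s r : Fin (t + 1)} {i j : V}
    (h : (Mycielskian G t).neighborSet (some (s, i)) =
      (Mycielskian G t).neighborSet (some (r, j))) :
    s.val = t ↔ r.val = t := by
  simpa using Set.ext_iff.1 h none

theorem adj_of_neighborSet_eq {s r : Fin (t + 1)} {i j k : V}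
    (h : (Mycielskian G t).neighborSet (some (s, i)) =
      (Mycielskian G t).neighborSet (some (r, j)))
    (hjk : G.Adj j k) : G.Adj i k := by
  have hk : some (⟨r - 1, by omega⟩, k) ∈ (Mycielskian G t).neighborSet (some (r, j)) :=
    adj_pred_level.2 hjk
  rw [← h] at hk
  exact hk.1

theorem level_eq_of_neighborSet_eq {s r : Fin (t + 1)} {i j k : V}
    (h : (Mycielskian G t).neighborSet (some (s, i)) =
      (Mycielskian G t).neighborSet (some (r, j)))
    (hik : G.Adj i k) : s = r := by
  have hjk : G.Adj j k := adj_of_neighborSet_eq h.symm hik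
  have hlevels (l : Fin (t + 1)) :
      (Mycielskian G t).Adj (some (s, i)) (some (l, k)) ↔
        (Mycielskian G t).Adj (some (r, j)) (some (l, k)) := Set.ext_iff.1 h (some (l, k))
  have h0 := hlevels ⟨0, by omega⟩
  have hs := hlevels ⟨min (s + 1) t, by omega⟩
  have hr := hlevels ⟨min (r + 1) t, by omega⟩
  have htop := level_eq_top_iff h
  simp only [adj_some_some, hik, hjk, true_and] at h0 hs hr
  ext
  omega

theorem neighborSet_none_ne {u : V} (hu : G.neighborSet u = ∅) (r : Fin (t + 1)) (j : V) :
    (Mycielskian G t).neighborSet none ≠ (Mycielskian G t).neighborSet (some (r, j)) := by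
  intro h
  have hw : some (Fin.last t, u) ∈ (Mycielskian G t).neighborSet none :=
    (adj_none_some (G := G) (i := u)).2 (Fin.val_last t)
  rw [h] at hw
  exact (Set.eq_empty_iff_forall_notMem.1 hu) j hw.1.symm

theorem neighborSet_eq_empty {i : V} (hi : G.neighborSet i = ∅) (s : Fin t) :
    (Mycielskian G t).neighborSet (some (s.castSucc, i)) = ∅ := by
  ext (_ | ⟨r, k⟩)
  · simp [s.isLt.ne]
  · rw [Set.eq_empty_iff_forall_notMem] at hi
    exact iff_of_false (fun hadj => hi k (adj_some_some.1 hadj).1) (Set.notMem_empty _)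

def shadows (T : Set V) (t : ℕ) : Set (Option (Fin (t + 1) × V)) :=
  {p | ∃ i ∈ T, ∃ s : Fin (t + 1), p = some (s, i)}

def innerShadows (u : V) (t : ℕ) : Set (Option (Fin (t + 1) × V)) :=
  {p | ∃ s : Fin (t + 1), 1 ≤ s.val ∧ s.val ≤ t - 1 ∧ p = some (s, u)}

theorem isTwinCover_shadows_union_innerShadows {T : Set V} (hT : IsTwinCover G T) {u : V}
    (hu : G.neighborSet u = ∅) (huT : u ∉ T) :
    IsTwinCover (Mycielskian G t) (shadows T t ∪ innerShadows u t) := by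
  rintro (_ | ⟨s, i⟩) (_ | ⟨r, j⟩) hne h
  · exact absurd rfl hne
  · exact absurd h (neighborSet_none_ne hu r j)
  · exact absurd h.symm (neighborSet_none_ne hu s i)
  rcases (G.neighborSet i).eq_empty_or_nonempty with hi | ⟨k, hik⟩
  · have hj : G.neighborSet j = ∅ := Set.eq_empty_of_forall_notMem fun k hjk =>
      (Set.eq_empty_iff_forall_notMem.1 hi) k (adj_of_neighborSet_eq h hjk)
    -- an isolated vertex other than `u` is a twin of `u`, hence lies in `T`
    by_cases hiu : i = u
    · by_cases hju : j = u
      · subst hiu hju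
        have htop := level_eq_top_iff h
        have hsr : s.val ≠ r.val := fun hsr => hne (by rw [Fin.ext hsr])
        by_cases hs : 1 ≤ s.val
        · exact Or.inl (Or.inr ⟨s, hs, by omega, rfl⟩)
        · exact Or.inr (Or.inr ⟨r, by omega, by omega, rfl⟩)
      · exact Or.inr (Or.inl ⟨j, (hT j u hju (hj.trans hu.symm)).resolve_right huT, r, rfl⟩)
    · exact Or.inl (Or.inl ⟨i, (hT i u hiu (hi.trans hu.symm)).resolve_right huT, s, rfl⟩)
  · obtain rfl := level_eq_of_neighborSet_eq h hik
    have hij : i ≠ j := fun hij => hne (by rw [hij])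
    exact (hT i j hij (neighborSet_some_eq_iff.1 h)).imp
      (fun hi => Or.inl ⟨i, hi, s, rfl⟩) (fun hj => Or.inl ⟨j, hj, s, rfl⟩)

theorem disjoint_shadows_innerShadows {T : Set V} {u : V} (huT : u ∉ T) :
    Disjoint (shadows T t) (innerShadows u t) := by
  rw [Set.disjoint_left]
  rintro _ ⟨i, hi, s, rfl⟩ ⟨r, -, -, h⟩
  obtain ⟨-, rfl⟩ := Prod.ext_iff.1 (Option.some.inj h)
  exact huT hi

theorem ncard_shadows (T : Set V) : (shadows T t).ncard = (t + 1) * T.ncard := by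
  have h : shadows T t = some '' (Set.univ ×ˢ T) := by
    ext p
    simp only [shadows, Set.mem_ofPred_eq, Set.mem_image, Set.mem_prod, Set.mem_univ, true_and]
    exact ⟨fun ⟨i, hi, s, h⟩ => ⟨(s, i), hi, h.symm⟩,
      fun ⟨⟨s, i⟩, hi, h⟩ => ⟨i, hi, s, h.symm⟩⟩
  rw [h, Set.ncard_image_of_injective _ (Option.some_injective _), Set.ncard_prod,
    Set.ncard_univ, Nat.card_eq_fintype_card, Fintype.card_fin]

theorem ncard_innerShadows (u : V) : (innerShadows u t).ncard = t - 1 := by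
  have h : innerShadows u t = (fun s => some (s, u)) '' (Fin.val ⁻¹' Set.Icc 1 (t - 1)) := by
    ext p
    simp [innerShadows, and_assoc, eq_comm]
  have hinj : Function.Injective fun s : Fin (t + 1) => some (s, u) := fun a b h =>
    (Prod.ext_iff.1 (Option.some.inj h)).1
  rw [h, Set.ncard_image_of_injective _ hinj,
    Set.ncard_preimage_of_injective_subset_range Fin.val_injective, Set.ncard_Icc_nat]
  · omega
  · intro n hn
    exact ⟨⟨n, by grind⟩, rfl⟩

def layer {ι : Type*} (S : Set (Option (ι × V))) (s : ι) : Set V :=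
  {i | some (s, i) ∈ S}

theorem sum_ncard_layer_le {ι : Type*} [Fintype ι] [Finite V] (S : Set (Option (ι × V))) :
    ∑ s, (layer S s).ncard ≤ S.ncard := by
  set part : ι → Set (Option (ι × V)) := fun s => (fun i => some (s, i)) '' layer S s
  have hpart : Pairwise (Function.onFun Disjoint part) := by
    intro a b hab
    rw [Function.onFun, Set.disjoint_left]
    rintro _ ⟨i, -, rfl⟩ ⟨j, -, h⟩
    exact hab (Prod.ext_iff.1 (Option.some.inj h)).1.symm
  calc ∑ s, (layer S s).ncard = ∑ s, (part s).ncard := by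
        refine Finset.sum_congr rfl fun s _ => (Set.ncard_image_of_injective _ ?_).symm
        exact fun i j h => (Prod.ext_iff.1 (Option.some.inj h)).2
    _ = (⋃ s, part s).ncard := by
        rw [Set.ncard_iUnion_of_finite (fun _ => Set.toFinite _) hpart, finsum_eq_sum_of_fintype]
    _ ≤ S.ncard := Set.ncard_le_ncard (Set.iUnion_subset fun s => by
        rintro _ ⟨i, hi, rfl⟩
        exact hi)

theorem isTwinCover_layer {S : Set (Option (Fin (t + 1) × V))}
    (hS : IsTwinCover (Mycielskian G t) S) (s : Fin (t + 1)) : IsTwinCover G (layer S s) :=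
  fun _ _ hij h => hS _ _ (fun h' => hij (Prod.ext_iff.1 (Option.some.inj h')).2)
    (neighborSet_some_eq_iff.2 h)

theorem le_ncard_of_isTwinCover [Finite V] {T : Set V} (hT : IsMinTwinCover G T) {u : V}
    (hu : G.neighborSet u = ∅) {S : Set (Option (Fin (t + 1) × V))}
    (hS : IsTwinCover (Mycielskian G t) S) : (t + 1) * T.ncard + t ≤ S.ncard + 1 := by
  have hlayer (s : Fin (t + 1)) : T.ncard ≤ (layer S s).ncard := hT.2 _ (isTwinCover_layer hS s)
  have hlow (a b : Fin t) (ha : (layer S a.castSucc).ncard ≤ T.ncard)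
      (hb : (layer S b.castSucc).ncard ≤ T.ncard) : a = b := by
    have hmiss (s : Fin t) (hs : (layer S s.castSucc).ncard ≤ T.ncard) :
        ∃ i, G.neighborSet i = ∅ ∧ some (s.castSucc, i) ∉ S := by
      by_contra! hall
      refine (hT.ncard_lt (isTwinCover_layer hS s.castSucc) (hall u hu) fun y hy => ?_).not_ge hs
      exact hall y (hy.trans hu)
    obtain ⟨i, hi, hai⟩ := hmiss a ha
    obtain ⟨j, hj, hbj⟩ := hmiss b hb
    have h := hS.eq_of_notMem hai hbj (by rw [neighborSet_eq_empty hi, neighborSet_eq_empty hj])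
    exact Fin.castSucc_injective _ (Prod.ext_iff.1 (Option.some.inj h)).1
  have hsum := Fintype.card_mul_succ_le_sum_add_one _ _ (fun a : Fin t => hlayer a.castSucc) hlow
  rw [Fintype.card_fin, mul_add, mul_one] at hsum
  have htotal := sum_ncard_layer_le S
  rw [Fin.sum_univ_castSucc] at htotal
  have hlast := hlayer (Fin.last t)
  rw [add_mul, one_mul]
  omega

end Mycielskian

/-- for a minimum twin cover `T` of `G` with at least one
isolated vertex, where `u` is the isolated vertex not in `T`, the set
`T_t ∪ {u^s : 1 ≤ s ≤ t−1}` is a minimum twin cover of `μ_t(G)` of size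
`(t+1)|T| + t − 1`. -/
theorem min_twin_cover_mycielskian {V : Type*} [Fintype V] (G : SimpleGraph V)
    (T : Set V) (hT : IsMinTwinCover G T)
    (u : V) (hu : ∀ x : V, ¬ G.Adj u x) (huT : u ∉ T) (t : ℕ) (ht : 1 ≤ t) :
    IsMinTwinCover (Mycielskian G t)
      ({p : Option (Fin (t + 1) × V) | ∃ i ∈ T, ∃ s : Fin (t + 1), p = some (s, i)} ∪
       {p : Option (Fin (t + 1) × V) | ∃ s : Fin (t + 1),
          1 ≤ s.val ∧ s.val ≤ t - 1 ∧ p = some (s, u)}) ∧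
    ({p : Option (Fin (t + 1) × V) | ∃ i ∈ T, ∃ s : Fin (t + 1), p = some (s, i)} ∪
       {p : Option (Fin (t + 1) × V) | ∃ s : Fin (t + 1),
          1 ≤ s.val ∧ s.val ≤ t - 1 ∧ p = some (s, u)}).ncard =
      (t + 1) * T.ncard + t - 1 := by
  have hu' : G.neighborSet u = ∅ := Set.eq_empty_of_forall_notMem hu
  set S₀ := Mycielskian.shadows T t ∪ Mycielskian.innerShadows u t
  change IsMinTwinCover (Mycielskian G t) S₀ ∧ S₀.ncard = (t + 1) * T.ncard + t - 1
  have hcard : S₀.ncard = (t + 1) * T.ncard + (t - 1) := by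
    rw [Set.ncard_union_eq (Mycielskian.disjoint_shadows_innerShadows huT),
      Mycielskian.ncard_shadows, Mycielskian.ncard_innerShadows]
  refine ⟨⟨Mycielskian.isTwinCover_shadows_union_innerShadows hT.1 hu' huT, fun S hS => ?_⟩,
    by omega⟩
  have := Mycielskian.le_ncard_of_isTwinCover hT hu' hS
  omega
end
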